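/- arXiv:2306.00886 — 8 statements merged into one kernel-verified Lean document; each statement's English description precedes it below -/
import Mathlib

section
/- Let n ≥ 1 and let f be the Boolean function f(x,y) = ⋀_{i=1}^n (x_i ∨ y_i) on pairs x, y ∈ {0,1}^n. Suppose g(x,y) = g1(x) ∧ g2(y) is a rectangle such that every pair (x,y) with g(x,y) = 1 also satisfies f(x,y) = 1. If a, b ∈ {0,1}^n satisfy g(a, ¬a) = 1 and g(b, ¬b) = 1, where ¬a denotes the componentwise Boolean complement of a, then a = b. (Equivalently: no two distinct models of f of Hamming weight exactly n lie in a common rectangle contained in f.) -/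
/-- Fooling-set property: if a rectangle `g1(x) ∧ g2(y)` is contained in
`f(x,y) = ⋀_i (x_i ∨ y_i)` and two Hamming-weight-`n` models `(a, ¬a)` and `(b, ¬b)`
lie in the rectangle, then `a = b`. -/
theorem fooling_set_rectangle (n : ℕ) (hn : 1 ≤ n)
    (g1 g2 : (Fin n → Bool) → Bool)
    (hsub : ∀ x y : Fin n → Bool, g1 x = true → g2 y = true →
      ∀ i : Fin n, x i = true ∨ y i = true)
    (a b : Fin n → Bool)
    (ha1 : g1 a = true) (ha2 : g2 (fun i => !(a i)) = true)
    (hb1 : g1 b = true) (hb2 : g2 (fun i => !(b i)) = true) :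
    a = b := by
  funext i
  have h1 := hsub a (fun i => !(b i)) ha1 hb2 i
  have h2 := hsub b (fun i => !(a i)) hb1 ha2 i
  simp at h1 h2
  cases h1 with
  | inl h => cases h2 with
    | inl h' => simp [h, h']
    | inr h' => simp [h, h'] at *
  | inr h => simp [h] at h2 ⊢; simp [h2]
end

section
/- Let n ≥ 1 and let f be the Boolean function f(x,y) = ⋀_{i=1}^n (x_i ∨ y_i) on pairs x, y ∈ {0,1}^n. Then every rectangle cover of f has size at least 2^n: if g^1, …, g^s are rectangles (each of the form g^k(x,y) = g1^k(x) ∧ g2^k(y)) whose disjunction equals f, then s ≥ 2^n. -/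
/-- Every rectangle cover of `f(x,y) = ⋀_{i=1}^n (x_i ∨ y_i)` has size at least `2^n`. -/
theorem rectangle_cover_lower_bound (n s : ℕ) (hn : 1 ≤ n)
    (g1 g2 : Fin s → (Fin n → Bool) → Bool)
    (hcover : ∀ x y : Fin n → Bool,
      ((∀ i : Fin n, x i = true ∨ y i = true) ↔
        ∃ k : Fin s, g1 k x = true ∧ g2 k y = true)) :
    2 ^ n ≤ s := by
  have h : ∀ x : Fin n → Bool, ∃ k, g1 k x = true ∧ g2 k (fun i => !x i) = true := by
    intro x
    exact (hcover x _).mp (fun i => by cases hx : x i <;> simp [hx])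
  choose F hF1 hF2 using h
  have hinj : Function.Injective F := by
    intro x x' hxx
    by_contra hne
    obtain ⟨i, hi⟩ : ∃ i, x i ≠ x' i := by
      by_contra h'; push_neg at h'; exact hne (funext h')
    cases hx : x i with
    | false =>
      have hc := (hcover x (fun i => !x' i)).mpr ⟨F x, hF1 x, hxx ▸ hF2 x'⟩ i
      rcases hc with h | h
      · rw [hx] at h; exact absurd h (by simp)
      · have hx' : x' i = false := by simpa using h
        rw [hx, hx'] at hi; exact hi rfl
    | true =>
      have hc := (hcover x' (fun i => !x i)).mpr ⟨F x', hF1 x', hxx ▸ hF2 x⟩ i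
      rcases hc with h | h
      · have hx' : x' i = true := h
        rw [hx, hx'] at hi; exact hi rfl
      · rw [hx] at h; exact absurd h (by simp)
  calc 2 ^ n = Fintype.card (Fin n → Bool) := by simp
    _ ≤ Fintype.card (Fin s) := Fintype.card_le_of_injective F hinj
    _ = s := Fintype.card_fin s
end

section
/- Fix n ≥ 1 and i ∈ {1,…,n}. Let F_{i,1} be the conjunction of the clause p_{1,1} ∨ … ∨ p_{n,1} and the clauses ¬p_{i',1} ∨ ¬p_{i',k} for all i' ∈ {1,…,i} and k ∈ {2,…,n+1}. Then for every assignment a of Boolean values to the variables p_{i',j'} (i' ∈ {1,…,n}, j' ∈ {1,…,n+1}): there exists an assignment b that agrees with a on all variables except possibly p_{1,1},…,p_{i,1} and satisfies F_{i,1}, if and only if either a(p_{i',1}) = 1 for some i' ∈ {i+1,…,n}, or there exists i* ∈ {1,…,i} such that a(p_{i*,j}) = 0 for all j ∈ {2,…,n+1}. -/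
/-- Characterization of `F'_{i,1}`, the result of existentially quantifying
`p_{1,1},…,p_{i,1}` from `F_{i,1} = ALO_1 ∧ ⋀_{i'≤i, 2≤k≤n+1} (¬p_{i',1} ∨ ¬p_{i',k})`.
Variables are `p_{i',j'}` for `i' ∈ {1,…,n}`, `j' ∈ {1,…,n+1}`, modelled by a total
function `ℕ → ℕ → Bool`. -/
theorem quantified_F_i_1 (n i : ℕ) (hn : 1 ≤ n) (hi1 : 1 ≤ i) (hin : i ≤ n)
    (a : ℕ → ℕ → Bool) :
    (∃ b : ℕ → ℕ → Bool,
      (∀ i' j' : ℕ, ¬ (1 ≤ i' ∧ i' ≤ i ∧ j' = 1) → b i' j' = a i' j') ∧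
      (∃ i' : ℕ, 1 ≤ i' ∧ i' ≤ n ∧ b i' 1 = true) ∧
      (∀ i' k : ℕ, 1 ≤ i' → i' ≤ i → 2 ≤ k → k ≤ n + 1 →
        ¬ (b i' 1 = true ∧ b i' k = true)))
    ↔
    ((∃ i' : ℕ, i + 1 ≤ i' ∧ i' ≤ n ∧ a i' 1 = true) ∨
     (∃ istar : ℕ, 1 ≤ istar ∧ istar ≤ i ∧
        ∀ j : ℕ, 2 ≤ j → j ≤ n + 1 → a istar j = false)) := by
  constructor
  · rintro ⟨b, hagree, ⟨i', h1, h2, h3⟩, hcl⟩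
    by_cases hii : i' ≤ i
    · right
      refine ⟨i', h1, hii, fun j hj1 hj2 => ?_⟩
      have hc := hcl i' j h1 hii hj1 hj2
      have hb : b i' j = a i' j := hagree i' j (by omega)
      rw [hb] at hc
      cases h : a i' j
      · rfl
      · exact absurd ⟨h3, h⟩ hc
    · left
      refine ⟨i', by omega, h2, ?_⟩
      rw [← hagree i' 1 (by omega)]; exact h3
  · rintro (⟨i', h1, h2, h3⟩ | ⟨istar, h1, h2, h3⟩)
    · refine ⟨fun x y => if 1 ≤ x ∧ x ≤ i ∧ y = 1 then false else a x y, ?_,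
        ⟨i', by omega, h2, ?_⟩, ?_⟩
      · intro x y hxy; simp [hxy]
      · have hni : ¬(i' ≤ i) := by omega
        simp [hni, h3]
      · intro x k hx1 hx2 hk1 hk2
        simp [hx1, hx2]
    · refine ⟨fun x y => if 1 ≤ x ∧ x ≤ i ∧ y = 1 then
          (if x = istar then true else false) else a x y, ?_,
        ⟨istar, h1, by omega, ?_⟩, ?_⟩
      · intro x y hxy; simp [hxy]
      · simp [h1, h2]
      · intro x k hx1 hx2 hk1 hk2
        rintro ⟨hb1, hbk⟩
        simp only [if_pos (by omega : 1 ≤ x ∧ x ≤ i ∧ (1:ℕ) = 1)] at hb1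
        by_cases hxs : x = istar
        · simp only [if_neg (by omega : ¬(1 ≤ x ∧ x ≤ i ∧ k = 1))] at hbk
          rw [hxs] at hbk
          rw [h3 k hk1 hk2] at hbk
          exact Bool.false_ne_true hbk
        · simp [hxs] at hb1
          rcases hb1 with ⟨h, _⟩
          omega
end

section
/- Fix n ≥ 2, i ∈ {1,…,n} and j ∈ {2,…,n}. Let Q = {p_{i',j'} : i' ∈ {1,…,n}, j' ∈ {1,…,j−1}} ∪ {p_{i',j} : i' ∈ {1,…,i}}. Let F_{i,j} be the conjunction of: (i) the clauses ALO_k := ⋁_{i'=1}^n p_{i',k} for all k ∈ {1,…,j}; (ii) the clauses ¬p_{i',k} ∨ ¬p_{i',ℓ} for all i' ∈ {1,…,n} and 1 ≤ k < ℓ ≤ n+1 with k < j; and (iii) the clauses ¬p_{i',j} ∨ ¬p_{i',k} for all i' ∈ {1,…,i} and k ∈ {1,…,n+1} with k ≠ j. For an assignment a' to the variables not in Q, let I := {i' ∈ {1,…,n} : a'(p_{i',j'}) = 0 for every variable p_{i',j'} not in Q}. Then a' extends to an assignment of all variables satisfying F_{i,j} if and only if either (1) |I| ≥ j and I ∩ {1,…,i}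 ≠ ∅, or (2) |I| ≥ j−1 and there exists i* ∈ {i+1,…,n} \ I with a'(p_{i*,j}) = 1. -/
/-- The set `Q` of quantified variables before eliminating `p_{i,j}` in column-wise order:
all variables of columns `1,…,j-1` plus the variables `p_{1,j},…,p_{i,j}`. -/
def inQ (i j : ℕ) (i' j' : ℕ) : Prop :=
  (1 ≤ j' ∧ j' ≤ j - 1) ∨ (j' = j ∧ 1 ≤ i' ∧ i' ≤ i)

open Classical in
/-- Characterization of `F'_{i,j}` (Claim 2 of the paper): for an assignment `a` to the
variables not in `Q`, with `I` the set of rows all of whose unquantified variables are `0`,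
`a` extends to a satisfying assignment of `F_{i,j}` iff `|I| ≥ j` and `I ∩ [i] ≠ ∅`,
or `|I| ≥ j - 1` and some `i* ∈ [i+1,n] \ I` has `a(p_{i*,j}) = 1`. -/
theorem quantified_F_i_j (n i j : ℕ) (hn : 2 ≤ n) (hi1 : 1 ≤ i) (hin : i ≤ n)
    (hj2 : 2 ≤ j) (hjn : j ≤ n) (a : ℕ → ℕ → Bool)
    (I : Finset ℕ)
    (hI : I = (Finset.Icc 1 n).filter
      (fun i' => ∀ j' : ℕ, 1 ≤ j' → j' ≤ n + 1 → ¬ inQ i j i' j' → a i' j' = false)) :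
    (∃ b : ℕ → ℕ → Bool,
      (∀ i' j' : ℕ, ¬ inQ i j i' j' → b i' j' = a i' j') ∧
      (∀ k : ℕ, 1 ≤ k → k ≤ j → ∃ i' : ℕ, 1 ≤ i' ∧ i' ≤ n ∧ b i' k = true) ∧
      (∀ i' k l : ℕ, 1 ≤ i' → i' ≤ n → 1 ≤ k → k < l → l ≤ n + 1 → k < j →
        ¬ (b i' k = true ∧ b i' l = true)) ∧
      (∀ i' k : ℕ, 1 ≤ i' → i' ≤ i → 1 ≤ k → k ≤ n + 1 → k ≠ j →
        ¬ (b i' j = true ∧ b i' k = true)))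
    ↔
    ((j ≤ I.card ∧ ∃ i' ∈ I, i' ≤ i) ∨
     (j - 1 ≤ I.card ∧ ∃ istar : ℕ, i + 1 ≤ istar ∧ istar ≤ n ∧ istar ∉ I ∧
        a istar j = true)) := by
  classical
  have hmemI : ∀ r, r ∈ I ↔ (1 ≤ r ∧ r ≤ n) ∧
      ∀ j', 1 ≤ j' → j' ≤ n + 1 → ¬ inQ i j r j' → a r j' = false := by
    intro r
    rw [hI]
    simp [Finset.mem_filter, Finset.mem_Icc, and_assoc]
  -- helper facts about inQ
  have hQ1 : ∀ r k, 1 ≤ k → k ≤ j - 1 → inQ i j r k := fun r k h1 h2 => Or.inl ⟨h1, h2⟩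
  have hQ2 : ∀ r, 1 ≤ r → r ≤ i → inQ i j r j := fun r h1 h2 => Or.inr ⟨rfl, h1, h2⟩
  have hnQ_ge : ∀ r k, 1 ≤ k → ¬ inQ i j r k → j ≤ k := by
    intro r k hk h
    have h1 : ¬ (1 ≤ k ∧ k ≤ j - 1) := fun hc => h (Or.inl hc)
    omega
  constructor
  · -- forward direction
    rintro ⟨b, hb1, hb2, hb3, hb4⟩
    have hex : ∀ k, ∃ r, 1 ≤ k → k ≤ j → 1 ≤ r ∧ r ≤ n ∧ b r k = true := by
      intro k
      by_cases h : 1 ≤ k ∧ k ≤ j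
      · obtain ⟨r, hr⟩ := hb2 k h.1 h.2
        exact ⟨r, fun _ _ => hr⟩
      · exact ⟨0, fun h1 h2 => absurd ⟨h1, h2⟩ h⟩
    choose f hf using hex
    have hfI : ∀ k, 1 ≤ k → k ≤ j - 1 → f k ∈ I := by
      intro k hk1 hk2
      obtain ⟨hr1, hrn, hrb⟩ := hf k hk1 (by omega)
      rw [hmemI]
      refine ⟨⟨hr1, hrn⟩, ?_⟩
      intro j' hj1 hj2' hjq
      by_contra hne
      have hge : j ≤ j' := hnQ_ge _ _ hj1 hjq
      have hbj' : b (f k) j' = true := by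
        rw [hb1 _ _ hjq]
        simpa using hne
      exact hb3 (f k) k j' hr1 hrn hk1 (by omega) hj2' (by omega) ⟨hrb, hbj'⟩
    have hinj : ∀ k l, 1 ≤ k → l ≤ j → k < l → f k ≠ f l := by
      intro k l hk1 hl2 hkl heq
      obtain ⟨h1, h2, h3b⟩ := hf k hk1 (by omega)
      obtain ⟨_, _, h3b'⟩ := hf l (by omega) hl2
      exact hb3 (f k) k l h1 h2 hk1 hkl (by omega) (by omega) ⟨h3b, heq ▸ h3b'⟩
    by_cases hfj : f j ≤ i
    · -- case (1)
      left
      obtain ⟨hj1', hjn', hjb⟩ := hf j (by omega) le_rfl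
      have hfjI : f j ∈ I := by
        rw [hmemI]
        refine ⟨⟨hj1', hjn'⟩, ?_⟩
        intro j' hj1 hj2' hjq
        by_contra hne
        have hne' : j' ≠ j := by
          intro h; subst h; exact hjq (hQ2 _ hj1' hfj)
        have hbj' : b (f j) j' = true := by
          rw [hb1 _ _ hjq]; simpa using hne
        exact hb4 (f j) j' hj1' hfj hj1 hj2' hne' ⟨hjb, hbj'⟩
      have hsub : (Finset.Icc 1 j).image f ⊆ I := by
        intro r hr
        obtain ⟨k, hk, hkr⟩ := Finset.mem_image.1 hr
        rw [Finset.mem_Icc] at hk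
        rcases eq_or_lt_of_le hk.2 with h | h
        · subst h; exact hkr ▸ hfjI
        · exact hkr ▸ hfI k hk.1 (by omega)
      have hcard : ((Finset.Icc 1 j).image f).card = j := by
        rw [Finset.card_image_of_injOn, Nat.card_Icc]
        · omega
        · intro k hk l hl heq
          simp only [Finset.coe_Icc, Set.mem_Icc] at hk hl
          by_contra hne
          rcases lt_or_gt_of_ne hne with h | h
          · exact hinj k l hk.1 hl.2 h heq
          · exact hinj l k hl.1 hk.2 h heq.symm
      refine ⟨by rw [← hcard]; exact Finset.card_le_card hsub, f j, hfjI, hfj⟩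
    · -- case (2)
      right
      obtain ⟨hj1', hjn', hjb⟩ := hf j (by omega) le_rfl
      have hnq : ¬ inQ i j (f j) j := by
        rintro (⟨_, h⟩ | ⟨_, _, h⟩) <;> omega
      have haj : a (f j) j = true := by rw [← hb1 _ _ hnq]; exact hjb
      have hsub : (Finset.Icc 1 (j-1)).image f ⊆ I := by
        intro r hr
        obtain ⟨k, hk, hkr⟩ := Finset.mem_image.1 hr
        rw [Finset.mem_Icc] at hk
        exact hkr ▸ hfI k hk.1 hk.2
      have hcard : ((Finset.Icc 1 (j-1)).image f).card = j - 1 := by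
        rw [Finset.card_image_of_injOn, Nat.card_Icc]
        · omega
        · intro k hk l hl heq
          simp only [Finset.coe_Icc, Set.mem_Icc] at hk hl
          by_contra hne
          rcases lt_or_gt_of_ne hne with h | h
          · exact hinj k l hk.1 (by omega) h heq
          · exact hinj l k hl.1 (by omega) h heq.symm
      have hfjnI : f j ∉ I := by
        intro hmem
        have := ((hmemI (f j)).1 hmem).2 j (by omega) (by omega) hnq
        rw [haj] at this; exact absurd this (by simp)
      exact ⟨by rw [← hcard]; exact Finset.card_le_card hsub,
        f j, by omega, hjn', hfjnI, haj⟩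
  · -- backward direction
    rintro (⟨hcard, i₀, hi₀I, hi₀i⟩ | ⟨hcard, istar, his1, his2, hisI, hisa⟩)
    · -- case (1): construct b using i₀ and j-1 further rows of I
      have h1i₀ : 1 ≤ i₀ ∧ i₀ ≤ n := ((hmemI i₀).1 hi₀I).1
      obtain ⟨T, hT, hTcard⟩ := Finset.exists_subset_card_eq
        (show j - 1 ≤ (I.erase i₀).card by
          rw [Finset.card_erase_of_mem hi₀I]; omega)
      have hEq : (Finset.Icc 1 (j-1)).card = T.card := by
        rw [Nat.card_Icc, hTcard]; omega
      set e := Finset.equivOfCardEq hEq with he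
      set g : ℕ → ℕ := fun k =>
        if h : k ∈ Finset.Icc 1 (j-1) then (e ⟨k, h⟩ : ℕ) else 0 with hg
      have hgT : ∀ k, 1 ≤ k → k ≤ j - 1 → g k ∈ T := by
        intro k h1 h2
        have h : k ∈ Finset.Icc 1 (j-1) := Finset.mem_Icc.2 ⟨h1, h2⟩
        rw [hg]; simp only [dif_pos h]
        exact (e ⟨k, h⟩).2
      have hgI : ∀ k, 1 ≤ k → k ≤ j - 1 → g k ∈ I ∧ g k ≠ i₀ := by
        intro k h1 h2
        have := hT (hgT k h1 h2)
        rw [Finset.mem_erase] at this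
        exact ⟨this.2, this.1⟩
      have hginj : ∀ k l, 1 ≤ k → k ≤ j - 1 → 1 ≤ l → l ≤ j - 1 → g k = g l → k = l := by
        intro k l hk1 hk2 hl1 hl2 heq
        have hk : k ∈ Finset.Icc 1 (j-1) := Finset.mem_Icc.2 ⟨hk1, hk2⟩
        have hl : l ∈ Finset.Icc 1 (j-1) := Finset.mem_Icc.2 ⟨hl1, hl2⟩
        rw [hg] at heq; simp only [dif_pos hk, dif_pos hl] at heq
        have := e.injective (Subtype.ext heq)
        exact congrArg Subtype.val this
      refine ⟨fun r k => if inQ i j r k then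
          (if (1 ≤ k ∧ k ≤ j - 1 ∧ g k = r) ∨ (k = j ∧ r = i₀) then true else false)
          else a r k, ?_, ?_, ?_, ?_⟩
      · intro r k hq
        dsimp only
        rw [if_neg hq]
      · intro k hk1 hkj
        by_cases hkeq : k = j
        · subst hkeq
          refine ⟨i₀, h1i₀.1, h1i₀.2, ?_⟩
          dsimp only
          rw [if_pos (hQ2 i₀ h1i₀.1 hi₀i), if_pos (Or.inr ⟨rfl, rfl⟩)]
        · have hk2 : k ≤ j - 1 := by omega
          have hgk := (hgI k hk1 hk2).1
          have hgn := ((hmemI (g k)).1 hgk).1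
          refine ⟨g k, hgn.1, hgn.2, ?_⟩
          dsimp only
          rw [if_pos (hQ1 _ _ hk1 hk2), if_pos (Or.inl ⟨hk1, hk2, rfl⟩)]
      · intro r k l hr1 hrn hk1 hkl hln hkj ⟨hbk, hbl⟩
        dsimp only at hbk hbl
        have hQk : inQ i j r k := hQ1 r k hk1 (by omega)
        rw [if_pos hQk] at hbk
        have hCk : (1 ≤ k ∧ k ≤ j - 1 ∧ g k = r) ∨ (k = j ∧ r = i₀) := by
          by_contra h; rw [if_neg h] at hbk; exact absurd hbk (by simp)
        have hCk' : g k = r := by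
          rcases hCk with ⟨_, _, h⟩ | ⟨h, _⟩
          · exact h
          · omega
        have hrI : r ∈ I := hCk' ▸ (hgI k hk1 (by omega)).1
        have hrne : r ≠ i₀ := hCk' ▸ (hgI k hk1 (by omega)).2
        by_cases hQl : inQ i j r l
        · rw [if_pos hQl] at hbl
          have hCl : (1 ≤ l ∧ l ≤ j - 1 ∧ g l = r) ∨ (l = j ∧ r = i₀) := by
            by_contra h; rw [if_neg h] at hbl; exact absurd hbl (by simp)
          rcases hCl with ⟨hl1, hl2, hl3⟩ | ⟨_, h⟩
          · have := hginj k l hk1 (by omega) hl1 hl2 (hl3 ▸ hCk')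
            omega
          · exact hrne h
        · rw [if_neg hQl] at hbl
          have := ((hmemI r).1 hrI).2 l (by omega) hln hQl
          rw [hbl] at this; exact absurd this (by simp)
      · intro r k hr1 hri hk1 hkn hkj ⟨hbj, hbk⟩
        dsimp only at hbj hbk
        rw [if_pos (hQ2 r hr1 hri)] at hbj
        have hCj : (1 ≤ j ∧ j ≤ j - 1 ∧ g j = r) ∨ (j = j ∧ r = i₀) := by
          by_contra h; rw [if_neg h] at hbj; exact absurd hbj (by simp)
        have hri₀ : r = i₀ := by
          rcases hCj with ⟨_, h, _⟩ | ⟨_, h⟩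
          · omega
          · exact h
        subst hri₀
        by_cases hQk : inQ i j r k
        · rw [if_pos hQk] at hbk
          have hCk : (1 ≤ k ∧ k ≤ j - 1 ∧ g k = r) ∨ (k = j ∧ r = r) := by
            by_contra h; rw [if_neg h] at hbk; exact absurd hbk (by simp)
          rcases hCk with ⟨h1, h2, h3⟩ | ⟨h, _⟩
          · exact (hgI k h1 h2).2 h3
          · exact hkj h
        · rw [if_neg hQk] at hbk
          have := ((hmemI r).1 hi₀I).2 k hk1 hkn hQk
          rw [hbk] at this; exact absurd this (by simp)
    · -- case (2): construct b using istar and j-1 rows of I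
      obtain ⟨T, hT, hTcard⟩ := Finset.exists_subset_card_eq
        (show j - 1 ≤ I.card from hcard)
      have hEq : (Finset.Icc 1 (j-1)).card = T.card := by
        rw [Nat.card_Icc, hTcard]; omega
      set e := Finset.equivOfCardEq hEq with he
      set g : ℕ → ℕ := fun k =>
        if h : k ∈ Finset.Icc 1 (j-1) then (e ⟨k, h⟩ : ℕ) else 0 with hg
      have hgI : ∀ k, 1 ≤ k → k ≤ j - 1 → g k ∈ I := by
        intro k h1 h2
        have h : k ∈ Finset.Icc 1 (j-1) := Finset.mem_Icc.2 ⟨h1, h2⟩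
        rw [hg]; simp only [dif_pos h]
        exact hT (e ⟨k, h⟩).2
      have hginj : ∀ k l, 1 ≤ k → k ≤ j - 1 → 1 ≤ l → l ≤ j - 1 → g k = g l → k = l := by
        intro k l hk1 hk2 hl1 hl2 heq
        have hk : k ∈ Finset.Icc 1 (j-1) := Finset.mem_Icc.2 ⟨hk1, hk2⟩
        have hl : l ∈ Finset.Icc 1 (j-1) := Finset.mem_Icc.2 ⟨hl1, hl2⟩
        rw [hg] at heq; simp only [dif_pos hk, dif_pos hl] at heq
        have := e.injective (Subtype.ext heq)
        exact congrArg Subtype.val this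
      have hnqstar : ¬ inQ i j istar j := by
        rintro (⟨_, h⟩ | ⟨_, _, h⟩) <;> omega
      refine ⟨fun r k => if inQ i j r k then
          (if 1 ≤ k ∧ k ≤ j - 1 ∧ g k = r then true else false)
          else a r k, ?_, ?_, ?_, ?_⟩
      · intro r k hq
        dsimp only
        rw [if_neg hq]
      · intro k hk1 hkj
        by_cases hkeq : k = j
        · subst hkeq
          refine ⟨istar, by omega, his2, ?_⟩
          dsimp only
          rw [if_neg hnqstar]; exact hisa
        · have hk2 : k ≤ j - 1 := by omega
          have hgk := hgI k hk1 hk2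
          have hgn := ((hmemI (g k)).1 hgk).1
          refine ⟨g k, hgn.1, hgn.2, ?_⟩
          dsimp only
          rw [if_pos (hQ1 _ _ hk1 hk2), if_pos ⟨hk1, hk2, rfl⟩]
      · intro r k l hr1 hrn hk1 hkl hln hkj ⟨hbk, hbl⟩
        dsimp only at hbk hbl
        have hQk : inQ i j r k := hQ1 r k hk1 (by omega)
        rw [if_pos hQk] at hbk
        have hCk : 1 ≤ k ∧ k ≤ j - 1 ∧ g k = r := by
          by_contra h; rw [if_neg h] at hbk; exact absurd hbk (by simp)
        have hrI : r ∈ I := hCk.2.2 ▸ hgI k hk1 hCk.2.1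
        by_cases hQl : inQ i j r l
        · rw [if_pos hQl] at hbl
          have hCl : 1 ≤ l ∧ l ≤ j - 1 ∧ g l = r := by
            by_contra h; rw [if_neg h] at hbl; exact absurd hbl (by simp)
          have := hginj k l hk1 hCk.2.1 hCl.1 hCl.2.1 (hCl.2.2 ▸ hCk.2.2)
          omega
        · rw [if_neg hQl] at hbl
          have := ((hmemI r).1 hrI).2 l (by omega) hln hQl
          rw [hbl] at this; exact absurd this (by simp)
      · intro r k hr1 hri hk1 hkn hkj ⟨hbj, hbk⟩
        dsimp only at hbj hbk
        rw [if_pos (hQ2 r hr1 hri)] at hbj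
        have : 1 ≤ j ∧ j ≤ j - 1 ∧ g j = r := by
          by_contra h; rw [if_neg h] at hbj; exact absurd hbj (by simp)
        omega
end

section
/- Fix n ≥ 2 and let G = ([2n], [2n+1], E) be the bipartite graph with E = {(j,j), (n+j,j), (j,n+1+j), (n+j,n+1+j), (j,n+1), (n+j,n+1) : j ∈ [n]}. Let H be the conjunction of: all clauses of AMO_j and AMO_{n+j} for j ∈ [n] (i.e., for each i ∈ {j, n+j}, the clauses ¬p_{i,j} ∨ ¬p_{i,n+1+j}, ¬p_{i,j} ∨ ¬p_{i,n+1}, ¬p_{i,n+1} ∨ ¬p_{i,n+1+j}), the clauses ALO_j := p_{j,j} ∨ p_{n+j,j} for j ∈ [n], and the clause ALO_{n+1} := ⋁_{j∈[n]} (p_{j,n+1} ∨ p_{n+j,n+1}), but not the clauses ALO_{n+1+j}. Restrict H by setting p_{n,2n+1} = 0, p_{2n,2n+1} = 0 and p_{2n,n+1} = 1. Then an assignment a of Boolean values to the variables {p_{j,n+1+j}, p_{n+j,n+1+j} : j ∈ [n−1]} extends to an assignment of all remaining unfixed variables satisfying the restricted formula if and only if for every j ∈ [n−1] it is not the case that both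 a(p_{j,n+1+j}) = 1 and a(p_{n+j,n+1+j}) = 1. -/
private def Bfun (n : ℕ) (a : ℕ → ℕ → Bool) (i k : ℕ) : Bool :=
  if k = n + 1 then decide (i = 2 * n)
  else if k = 2 * n + 1 then false
  else if k = n then decide (i = n)
  else if k < n then (if i = k then !(a k (n + 1 + k)) else !(a (n + k) (n + 1 + k)))
  else a i k

private lemma B_col (n : ℕ) (a : ℕ → ℕ → Bool) (i k : ℕ) (hk : k < n) :
    Bfun n a i k = if i = k then !(a k (n + 1 + k)) else !(a (n + k) (n + 1 + k)) := by
  unfold Bfun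
  rw [if_neg (by omega), if_neg (by omega), if_neg (by omega), if_pos hk]

private lemma B_n (n : ℕ) (a : ℕ → ℕ → Bool) (i : ℕ) (hn : 1 ≤ n) :
    Bfun n a i n = decide (i = n) := by
  unfold Bfun
  rw [if_neg (by omega), if_neg (by omega), if_pos rfl]

private lemma B_n1 (n : ℕ) (a : ℕ → ℕ → Bool) (i : ℕ) :
    Bfun n a i (n + 1) = decide (i = 2 * n) := by
  unfold Bfun
  rw [if_pos rfl]

private lemma B_last (n : ℕ) (a : ℕ → ℕ → Bool) (i : ℕ) (hn : 1 ≤ n) :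
    Bfun n a i (2 * n + 1) = false := by
  unfold Bfun
  rw [if_neg (by omega), if_pos rfl]

private lemma B_hi (n : ℕ) (a : ℕ → ℕ → Bool) (i k : ℕ) (h1 : n + 1 < k) (h2 : k < 2 * n + 1) :
    Bfun n a i k = a i k := by
  unfold Bfun
  rw [if_neg (by omega), if_neg (by omega), if_neg (by omega), if_neg (by omega)]

/-- For the graph `G = ([2n],[2n+1],E)` of Theorem 2, consider the conjunction `H` of all
`AMO` clauses, the clauses `ALO_j` for `j ∈ [n]` and `ALO_{n+1}` (but not the `ALO_{n+1+j}`),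
restricted by `p_{n,2n+1} = 0`, `p_{2n,2n+1} = 0`, `p_{2n,n+1} = 1`. An assignment `a` to the
variables `p_{j,n+1+j}, p_{n+j,n+1+j}` (`j ∈ [n-1]`) extends to a satisfying assignment of the
restricted formula iff for no `j ∈ [n-1]` both `a(p_{j,n+1+j})` and `a(p_{n+j,n+1+j})` are `1`. -/
theorem restricted_H_extension (n : ℕ) (hn : 2 ≤ n) (a : ℕ → ℕ → Bool) :
    (∃ b : ℕ → ℕ → Bool,
      (∀ j : ℕ, 1 ≤ j → j ≤ n - 1 →
        b j (n + 1 + j) = a j (n + 1 + j) ∧ b (n + j) (n + 1 + j) = a (n + j) (n + 1 + j)) ∧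
      b n (2 * n + 1) = false ∧ b (2 * n) (2 * n + 1) = false ∧ b (2 * n) (n + 1) = true ∧
      (∀ j : ℕ, 1 ≤ j → j ≤ n → ∀ i ∈ ({j, n + j} : Set ℕ),
        ¬ (b i j = true ∧ b i (n + 1 + j) = true) ∧
        ¬ (b i j = true ∧ b i (n + 1) = true) ∧
        ¬ (b i (n + 1) = true ∧ b i (n + 1 + j) = true)) ∧
      (∀ j : ℕ, 1 ≤ j → j ≤ n → (b j j = true ∨ b (n + j) j = true)) ∧
      (∃ j : ℕ, 1 ≤ j ∧ j ≤ n ∧ (b j (n + 1) = true ∨ b (n + j) (n + 1) = true)))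
    ↔
    (∀ j : ℕ, 1 ≤ j → j ≤ n - 1 →
      ¬ (a j (n + 1 + j) = true ∧ a (n + j) (n + 1 + j) = true)) := by
  constructor
  · rintro ⟨b, hfix, -, -, -, hamo, halo, -⟩ j h1 h2 ⟨ha1, ha2⟩
    have hjn : j ≤ n := le_trans h2 (Nat.sub_le n 1)
    obtain ⟨hb1, hb2⟩ := hfix j h1 h2
    have c1 := (hamo j h1 hjn j (by left; rfl)).1
    have c2 := (hamo j h1 hjn (n + j) (by right; rfl)).1
    rcases halo j h1 hjn with h | h
    · exact c1 ⟨h, hb1.trans ha1⟩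
    · exact c2 ⟨h, hb2.trans ha2⟩
  · intro hyp
    have hn1 : 1 ≤ n := by omega
    refine ⟨Bfun n a, ?_, ?_, ?_, ?_, ?_, ?_, ?_⟩
    · intro j h1 h2
      rw [B_hi n a j (n + 1 + j) (by omega) (by omega),
          B_hi n a (n + j) (n + 1 + j) (by omega) (by omega)]
      exact ⟨rfl, rfl⟩
    · rw [B_last n a n hn1]
    · rw [B_last n a (2 * n) hn1]
    · rw [B_n1]; simp
    · intro j h1 h2 i hi
      rcases Nat.lt_or_ge j n with hj | hj
      · -- j < n
        have e1 : Bfun n a i (n + 1 + j) = a i (n + 1 + j) :=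
          B_hi n a i (n + 1 + j) (by omega) (by omega)
        have e2 : Bfun n a i (n + 1) = decide (i = 2 * n) := B_n1 n a i
        have e3 : Bfun n a i j = if i = j then !(a j (n + 1 + j)) else !(a (n + j) (n + 1 + j)) :=
          B_col n a i j hj
        rcases hi with hi | hi
        · subst hi
          rw [if_pos rfl] at e3
          refine ⟨?_, ?_, ?_⟩
          · rw [e1, e3]; rintro ⟨x, y⟩; rw [y] at x; simp at x
          · rw [e2]; rintro ⟨-, x⟩; simp at x; omega
          · rw [e2]; rintro ⟨x, -⟩; simp at x; omega
        · simp only [Set.mem_singleton_iff] at hi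
          subst hi
          rw [if_neg (by omega)] at e3
          refine ⟨?_, ?_, ?_⟩
          · rw [e1, e3]; rintro ⟨x, y⟩; rw [y] at x; simp at x
          · rw [e2]; rintro ⟨-, x⟩; simp at x; omega
          · rw [e2]; rintro ⟨x, -⟩; simp at x; omega
      · -- j = n
        have hjn : j = n := by omega
        simp only [hjn]
        have e1 : Bfun n a i (n + 1 + n) = false := by
          have : n + 1 + n = 2 * n + 1 := by omega
          rw [this]; exact B_last n a i hn1
        have e2 : Bfun n a i (n + 1) = decide (i = 2 * n) := B_n1 n a i
        have e3 : Bfun n a i n = decide (i = n) := B_n n a i hn1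
        refine ⟨?_, ?_, ?_⟩
        · rw [e1]; rintro ⟨-, x⟩; simp at x
        · rw [e2, e3]; rintro ⟨x, y⟩; simp at x y; omega
        · rw [e1]; rintro ⟨-, x⟩; simp at x
    · intro j h1 h2
      rcases Nat.lt_or_ge j n with hj | hj
      · rw [B_col n a j j hj, B_col n a (n + j) j hj, if_pos rfl, if_neg (by omega)]
        have h := hyp j h1 (by omega)
        revert h
        cases a j (n + 1 + j) <;> cases a (n + j) (n + 1 + j) <;> simp
      · have hjn : j = n := by omega
        simp only [hjn]
        left
        rw [B_n n a n hn1]; simp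
    · refine ⟨n, hn1, le_refl n, Or.inr ?_⟩
      rw [B_n1]; simp; omega
end

section
/- Fix n ≥ 2. For every assignment a of Boolean values to the variables {p_{j,n+1+j}, p_{n+j,n+1+j} : j ∈ [n−1]}: a extends to an assignment of the variables p_{j,j}, p_{n+j,j} (j ∈ [n]) satisfying the formula ¬p_{2n,n} ∧ (p_{n,n} ∨ p_{2n,n}) ∧ ⋀_{j∈[n−1]} [(¬p_{j,j} ∨ ¬p_{j,n+1+j}) ∧ (¬p_{n+j,j} ∨ ¬p_{n+j,n+1+j}) ∧ (p_{j,j} ∨ p_{n+j,j})], if and only if for every j ∈ [n−1] it is not the case that both a(p_{j,n+1+j}) = 1 and a(p_{n+j,n+1+j}) = 1. -/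
/-- An assignment `a` to the variables `p_{j,n+1+j}, p_{n+j,n+1+j}` (`j ∈ [n-1]`) extends,
over the variables `p_{j,j}, p_{n+j,j}` (`j ∈ [n]`), to a satisfying assignment of
`¬p_{2n,n} ∧ (p_{n,n} ∨ p_{2n,n}) ∧ ⋀_{j∈[n-1]} [(¬p_{j,j} ∨ ¬p_{j,n+1+j}) ∧
(¬p_{n+j,j} ∨ ¬p_{n+j,n+1+j}) ∧ (p_{j,j} ∨ p_{n+j,j})]` iff for no `j ∈ [n-1]` both
`a(p_{j,n+1+j})` and `a(p_{n+j,n+1+j})` are `1`. -/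
theorem small_formula_extension (n : ℕ) (hn : 2 ≤ n) (a : ℕ → ℕ → Bool) :
    (∃ b : ℕ → ℕ → Bool,
      (∀ j : ℕ, 1 ≤ j → j ≤ n - 1 →
        b j (n + 1 + j) = a j (n + 1 + j) ∧ b (n + j) (n + 1 + j) = a (n + j) (n + 1 + j)) ∧
      b (2 * n) n = false ∧ (b n n = true ∨ b (2 * n) n = true) ∧
      (∀ j : ℕ, 1 ≤ j → j ≤ n - 1 →
        ¬ (b j j = true ∧ b j (n + 1 + j) = true) ∧
        ¬ (b (n + j) j = true ∧ b (n + j) (n + 1 + j) = true) ∧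
        (b j j = true ∨ b (n + j) j = true)))
    ↔
    (∀ j : ℕ, 1 ≤ j → j ≤ n - 1 →
      ¬ (a j (n + 1 + j) = true ∧ a (n + j) (n + 1 + j) = true)) := by
  constructor
  · rintro ⟨b, hext, -, -, hsat⟩ j hj1 hj2 ⟨ha1, ha2⟩
    obtain ⟨he1, he2⟩ := hext j hj1 hj2
    obtain ⟨h1, h2, h3⟩ := hsat j hj1 hj2
    rcases h3 with h | h
    · exact h1 ⟨h, he1.trans ha1⟩
    · exact h2 ⟨h, he2.trans ha2⟩
  · intro ha
    refine ⟨fun i k =>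
      if k = n then decide (i = n)
      else if k = i then !(a i (n + 1 + i))
      else if i = n + k then !(a (n + k) (n + 1 + k))
      else a i k, ?_, ?_, ?_, ?_⟩
    · intro j hj1 hj2
      constructor <;> simp only [] <;>
        rw [if_neg (by omega), if_neg (by omega), if_neg (by omega)]
    · beta_reduce; rw [if_pos rfl]; simp; omega
    · left; beta_reduce; rw [if_pos rfl]; simp
    · intro j hj1 hj2
      have hjn : j ≠ n := by omega
      refine ⟨?_, ?_, ?_⟩ <;> beta_reduce
      · rw [if_neg hjn, if_pos rfl, if_neg (by omega), if_neg (by omega), if_neg (by omega)]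
        rintro ⟨h1, h2⟩
        rw [h2] at h1; simp at h1
      · rw [if_neg hjn, if_neg (by omega), if_pos rfl, if_neg (by omega), if_neg (by omega),
          if_neg (by omega)]
        rintro ⟨h1, h2⟩
        rw [h2] at h1; simp at h1
      · rw [if_neg hjn, if_pos rfl, if_neg hjn, if_neg (by omega), if_pos rfl]
        have := ha j hj1 hj2
        by_cases h : a j (n + 1 + j) = true
        · right; simp [h] at this ⊢; simp [this]
        · left; simp [h]
end

section
/- Fix n ≥ 2 and let G = ([2n], [2n+1], E) be the bipartite graph with E = {(j,j), (n+j,j), (j,n+1+j), (n+j,n+1+j), (j,n+1), (n+j,n+1) : j ∈ [n]}. Let H be the conjunction of all AMO clauses of G-PHP, the clauses ALO_j for j ∈ [n], and the clause ALO_{n+1}, and let H' be H restricted by p_{n,2n+1} = 0, p_{2n,2n+1} = 0 and p_{2n,n+1} = 1. Then an assignment a to the variables {p_{j,n+1+j}, p_{n+j,n+1+j} : j ∈ [n−1]} extends to a satisfying assignment of H' if and only if a extends (over the variables p_{j,j}, p_{n+j,j}, j ∈ [n]) to a satisfying assignment of the formula ¬p_{2n,n} ∧ (p_{n,n} ∨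 p_{2n,n}) ∧ ⋀_{j∈[n−1]} [(¬p_{j,j} ∨ ¬p_{j,n+1+j}) ∧ (¬p_{n+j,j} ∨ ¬p_{n+j,n+1+j}) ∧ (p_{j,j} ∨ p_{n+j,j})]. -/
/-!
Forward, every clause of the reduced formula is a clause of `H'` except `¬p_{2n,n}`, which
follows from `AMO_{2n}` and `p_{2n,n+1} = 1`. Backward, the literals `¬p_{i,n+1}` (`i ≠ 2n`) are
pure, so we may set `p_{2n,n+1} = 1`, every other variable of hole `n + 1` and of hole `2n + 1`
to `0`, and keep `b` elsewhere; each `AMO` clause of `H'` then either is a clause of the reduced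
formula, or is satisfied because it mentions a variable set to `0`, or contains `¬p_{2n,n}`.
-/

namespace PureLiteralStep

/-- `b i j` is the value of `p_{i,j}`. Pigeon `i ∈ {j, n + j}` has the holes `j`, `n + 1 + j`
and `n + 1`, and the three negated conjunctions are its `AMO_i` clauses. -/
def RestrictedSat (n : ℕ) (b : ℕ → ℕ → Bool) : Prop :=
  b n (2 * n + 1) = false ∧ b (2 * n) (2 * n + 1) = false ∧ b (2 * n) (n + 1) = true ∧
  (∀ j : ℕ, 1 ≤ j → j ≤ n → ∀ i ∈ ({j, n + j} : Set ℕ),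
    ¬ (b i j = true ∧ b i (n + 1 + j) = true) ∧
    ¬ (b i j = true ∧ b i (n + 1) = true) ∧
    ¬ (b i (n + 1) = true ∧ b i (n + 1 + j) = true)) ∧
  (∀ j : ℕ, 1 ≤ j → j ≤ n → (b j j = true ∨ b (n + j) j = true)) ∧
  (∃ j : ℕ, 1 ≤ j ∧ j ≤ n ∧ (b j (n + 1) = true ∨ b (n + j) (n + 1) = true))

def ReducedSat (n : ℕ) (b : ℕ → ℕ → Bool) : Prop :=
  b (2 * n) n = false ∧ (b n n = true ∨ b (2 * n) n = true) ∧
  (∀ j : ℕ, 1 ≤ j → j ≤ n - 1 →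
    ¬ (b j j = true ∧ b j (n + 1 + j) = true) ∧
    ¬ (b (n + j) j = true ∧ b (n + j) (n + 1 + j) = true) ∧
    (b j j = true ∨ b (n + j) j = true))

variable {n : ℕ} {b : ℕ → ℕ → Bool}

theorem ReducedSat.of_restrictedSat (hn : 0 < n) (h : RestrictedSat n b) : ReducedSat n b := by
  obtain ⟨-, -, hmatch, hamo, halo, -⟩ := h
  refine ⟨?_, by simpa [two_mul] using halo n hn le_rfl, fun j hj1 hjn => ?_⟩
  · have hamo_last := (hamo n hn le_rfl (2 * n) (Or.inr (two_mul n))).2.1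
    exact Bool.eq_false_iff.mpr fun hb => hamo_last ⟨hb, hmatch⟩
  · exact ⟨(hamo j hj1 (by omega) j (Or.inl rfl)).1,
      (hamo j hj1 (by omega) (n + j) (Or.inr rfl)).1, halo j hj1 (by omega)⟩

def extend (n : ℕ) (b : ℕ → ℕ → Bool) (i j : ℕ) : Bool :=
  if j = n + 1 then decide (i = 2 * n) else if j = 2 * n + 1 then false else b i j

theorem extend_of_ne {i j : ℕ} (h₁ : j ≠ n + 1) (h₂ : j ≠ 2 * n + 1) :
    extend n b i j = b i j := by
  simp [extend, h₁, h₂]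

@[simp] theorem extend_succ (i : ℕ) : extend n b i (n + 1) = decide (i = 2 * n) := by
  simp [extend]

theorem extend_two_mul_succ (hn : 0 < n) (i : ℕ) : extend n b i (2 * n + 1) = false := by
  rw [extend, if_neg (by omega), if_pos rfl]

theorem extend_amo (hn : 0 < n) (h : ReducedSat n b) {i j : ℕ} (hj1 : 1 ≤ j) (hjn : j ≤ n)
    (hi : i ∈ ({j, n + j} : Set ℕ)) :
    ¬ (extend n b i j = true ∧ extend n b i (n + 1 + j) = true) ∧
    ¬ (extend n b i j = true ∧ extend n b i (n + 1) = true) ∧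
    ¬ (extend n b i (n + 1) = true ∧ extend n b i (n + 1 + j) = true) := by
  obtain ⟨hlast, -, hcl⟩ := h
  have hj : extend n b i j = b i j := extend_of_ne (by omega) (by omega)
  have hmatched : extend n b i (n + 1) = true → i = 2 * n ∧ j = n := by
    simp only [extend_succ, decide_eq_true_eq]
    rcases hi with rfl | rfl <;> omega
  refine ⟨fun ⟨hij, hij'⟩ => ?_, fun ⟨hij, hi1⟩ => ?_, fun ⟨hi1, hij'⟩ => ?_⟩
  · rcases hjn.lt_or_eq with hjn | hjn
    · rw [hj] at hij
      rw [extend_of_ne (by omega) (by omega)] at hij'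
      rcases hi with rfl | rfl
      exacts [(hcl i hj1 (by omega)).1 ⟨hij, hij'⟩, (hcl j hj1 (by omega)).2.1 ⟨hij, hij'⟩]
    · rw [show n + 1 + j = 2 * n + 1 by omega, extend_two_mul_succ hn] at hij'
      exact Bool.false_ne_true hij'
  · obtain ⟨rfl, rfl⟩ := hmatched hi1
    simp [hj, hlast] at hij
  · obtain ⟨-, rfl⟩ := hmatched hi1
    rw [show j + 1 + j = 2 * j + 1 by omega, extend_two_mul_succ hn] at hij'
    exact Bool.false_ne_true hij'

theorem restrictedSat_extend (hn : 0 < n) (h : ReducedSat n b) :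
    RestrictedSat n (extend n b) := by
  refine ⟨extend_two_mul_succ hn n, extend_two_mul_succ hn (2 * n), by simp,
    fun j hj1 hjn i hi => extend_amo hn h hj1 hjn hi, fun j hj1 hjn => ?_,
    ⟨n, hn, le_rfl, Or.inr (by simp [two_mul])⟩⟩
  obtain ⟨hlast, hn_alo, hcl⟩ := h
  rw [extend_of_ne (by omega) (by omega), extend_of_ne (by omega) (by omega)]
  rcases hjn.lt_or_eq with hjn | rfl
  · exact (hcl j hj1 (by omega)).2.2
  · simpa [hlast, two_mul] using hn_alo

end PureLiteralStep

/-- Pure-literal elimination step of Theorem 2: an assignment `a` to the variables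
`p_{j,n+1+j}, p_{n+j,n+1+j}` (`j ∈ [n-1]`) extends to a satisfying assignment of the
restricted formula `H'` (all `AMO` clauses of `G`-PHP, `ALO_j` for `j ∈ [n]` and
`ALO_{n+1}`, restricted by `p_{n,2n+1} = 0`, `p_{2n,2n+1} = 0`, `p_{2n,n+1} = 1`)
iff it extends (over the variables `p_{j,j}, p_{n+j,j}`, `j ∈ [n]`) to a satisfying
assignment of
`¬p_{2n,n} ∧ (p_{n,n} ∨ p_{2n,n}) ∧ ⋀_{j∈[n-1]} [(¬p_{j,j} ∨ ¬p_{j,n+1+j}) ∧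
(¬p_{n+j,j} ∨ ¬p_{n+j,n+1+j}) ∧ (p_{j,j} ∨ p_{n+j,j})]`. -/
theorem pure_literal_step (n : ℕ) (hn : 2 ≤ n) (a : ℕ → ℕ → Bool) :
    (∃ b : ℕ → ℕ → Bool,
      (∀ j : ℕ, 1 ≤ j → j ≤ n - 1 →
        b j (n + 1 + j) = a j (n + 1 + j) ∧ b (n + j) (n + 1 + j) = a (n + j) (n + 1 + j)) ∧
      b n (2 * n + 1) = false ∧ b (2 * n) (2 * n + 1) = false ∧ b (2 * n) (n + 1) = true ∧
      (∀ j : ℕ, 1 ≤ j → j ≤ n → ∀ i ∈ ({j, n + j} : Set ℕ),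
        ¬ (b i j = true ∧ b i (n + 1 + j) = true) ∧
        ¬ (b i j = true ∧ b i (n + 1) = true) ∧
        ¬ (b i (n + 1) = true ∧ b i (n + 1 + j) = true)) ∧
      (∀ j : ℕ, 1 ≤ j → j ≤ n → (b j j = true ∨ b (n + j) j = true)) ∧
      (∃ j : ℕ, 1 ≤ j ∧ j ≤ n ∧ (b j (n + 1) = true ∨ b (n + j) (n + 1) = true)))
    ↔
    (∃ b : ℕ → ℕ → Bool,
      (∀ j : ℕ, 1 ≤ j → j ≤ n - 1 →
        b j (n + 1 + j) = a j (n + 1 + j) ∧ b (n + j) (n + 1 + j) = a (n + j) (n + 1 + j)) ∧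
      b (2 * n) n = false ∧ (b n n = true ∨ b (2 * n) n = true) ∧
      (∀ j : ℕ, 1 ≤ j → j ≤ n - 1 →
        ¬ (b j j = true ∧ b j (n + 1 + j) = true) ∧
        ¬ (b (n + j) j = true ∧ b (n + j) (n + 1 + j) = true) ∧
        (b j j = true ∨ b (n + j) j = true))) :=
  ⟨fun ⟨b, hagree, h⟩ => ⟨b, hagree, PureLiteralStep.ReducedSat.of_restrictedSat (by omega) h⟩,
    fun ⟨b, hagree, h⟩ => ⟨PureLiteralStep.extend n b, fun j hj1 hjn => by
      rw [PureLiteralStep.extend_of_ne (by omega) (by omega),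
        PureLiteralStep.extend_of_ne (by omega) (by omega)]
      exact hagree j hj1 hjn, PureLiteralStep.restrictedSat_extend (by omega) h⟩⟩
end

section
/- Fix n ≥ 3. Let F be the Boolean function on assignments a to the variables p_{i,j} (i ∈ {2,…,n}, j ∈ {1,…,n+1}) defined by: F(a) = 1 if and only if there exists j* ∈ {1,…,n+1} such that for every j ≠ j* there is some i ∈ {2,…,n} with a(p_{i,j}) = 1. Let F'' be the restriction of F obtained by setting p_{i,j} = 0 for all i ∈ {4,…,n} and j ∈ {1,…,n+1} and setting p_{2,n+1} = p_{3,n+1} = 0. Then, writing x_j := p_{2,j} and y_j := p_{3,j} for j ∈ {1,…,n}, F'' equals the function ⋀_{j=1}^n (x_j ∨ y_j), and hence every rectangle cover of F'' with respect to the partition ({p_{2,1},…,p_{2,n}}, {p_{3,1},…,p_{3,n}}) has size at least 2^n. -/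
/-- The restriction `F''` of the function `F` (which holds iff there is a column `j*` such
that every other column `j ∈ [n+1]` has some `p_{i,j} = 1` with `i ∈ {2,…,n}`), obtained by
setting `p_{i,j} = 0` for all rows `i ∈ {4,…,n}` and `p_{2,n+1} = p_{3,n+1} = 0`, viewed as a
function of `x_j := p_{2,j}` and `y_j := p_{3,j}` for `j ∈ [n]`. -/
def F''restricted (n : ℕ) (x y : ℕ → Bool) : Prop :=
  ∃ jstar : ℕ, 1 ≤ jstar ∧ jstar ≤ n + 1 ∧
    ∀ j : ℕ, 1 ≤ j → j ≤ n + 1 → j ≠ jstar →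
      ∃ i : ℕ, 2 ≤ i ∧ i ≤ n ∧
        (if i = 2 then (if j ≤ n then x j else false)
         else if i = 3 then (if j ≤ n then y j else false)
         else false) = true

/-- `F''` equals `⋀_{j=1}^n (x_j ∨ y_j)`, and hence every rectangle cover of `F''` with
respect to the partition into the `x`- and `y`-variables has size at least `2^n`. -/
theorem F''_restriction_hard (n : ℕ) (hn : 3 ≤ n) :
    (∀ x y : ℕ → Bool,
      F''restricted n x y ↔ ∀ j : ℕ, 1 ≤ j → j ≤ n → (x j = true ∨ y j = true)) ∧
    (∀ s : ℕ, ∀ g1 g2 : Fin s → (ℕ → Bool) → Prop,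
      (∀ x y : ℕ → Bool,
        F''restricted n x y ↔ ∃ k : Fin s, g1 k x ∧ g2 k y) →
      2 ^ n ≤ s) := by
  classical
  have key : ∀ x y : ℕ → Bool,
      F''restricted n x y ↔ ∀ j : ℕ, 1 ≤ j → j ≤ n → (x j = true ∨ y j = true) := by
    intro x y
    constructor
    · rintro ⟨jstar, h1, h2, h⟩
      intro j hj1 hj2
      by_cases hjs : j = jstar
      · exfalso
        obtain ⟨i, hi1, hi2, hi⟩ := h (n + 1) (by omega) le_rfl (by omega)
        have : ¬ (n + 1 ≤ n) := by omega
        split at hi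
        · simp [this] at hi
        · split at hi
          · simp [this] at hi
          · simp at hi
      · obtain ⟨i, hi1, hi2, hi⟩ := h j hj1 (by omega) hjs
        have hjn : j ≤ n := by omega
        split at hi
        · left; simpa [hjn] using hi
        · split at hi
          · right; simpa [hjn] using hi
          · simp at hi
    · intro h
      refine ⟨n + 1, by omega, le_rfl, fun j hj1 hj2 hne => ?_⟩
      have hjn : j ≤ n := by omega
      rcases h j hj1 hjn with hx | hy
      · exact ⟨2, le_rfl, by omega, by simp [hjn, hx]⟩
      · exact ⟨3, by omega, by omega, by simp [hjn, hy]⟩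
  refine ⟨key, ?_⟩
  intro s g1 g2 hcov
  set I : Finset ℕ := Finset.Icc 1 n with hI
  have hmem : ∀ S : I.powerset,
      F''restricted n (fun j => decide (j ∈ S.1)) (fun j => decide (j ∉ S.1)) := by
    intro S
    rw [key]
    intro j hj1 hj2
    by_cases h : j ∈ S.1
    · left; simp [h]
    · right; simp [h]
  choose k hk1 hk2 using fun S : I.powerset => (hcov _ _).1 (hmem S)
  have hsub : ∀ S T : I.powerset, k S = k T → T.1 ⊆ S.1 := by
    intro S T hST j hjT
    have hF : F''restricted n (fun j => decide (j ∈ S.1)) (fun j => decide (j ∉ T.1)) := by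
      rw [hcov]
      exact ⟨k S, hk1 S, hST ▸ hk2 T⟩
    have hjI : j ∈ I := Finset.mem_powerset.mp T.2 hjT
    rw [hI, Finset.mem_Icc] at hjI
    have := (key _ _).1 hF j hjI.1 hjI.2
    rcases this with h | h
    · simpa using h
    · exfalso; simp [hjT] at h
  have hinj : Function.Injective k := by
    intro S T hST
    apply Subtype.ext
    exact Finset.Subset.antisymm (hsub T S hST.symm) (hsub S T hST)
  have hcard := Fintype.card_le_of_injective k hinj
  have hI_card : I.card = n := by simp [hI]
  have : Fintype.card I.powerset = 2 ^ n := by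
    rw [Fintype.card_coe, Finset.card_powerset, hI_card]
  rw [this, Fintype.card_fin] at hcard
  exact hcard
end
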